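/- arXiv:0901.3899 — 3 statements merged into one kernel-verified Lean document; each statement's English description precedes it below -/
import Mathlib

section
/- If Δ is a connected locally complete intersection simplicial complex, then Δ is pure, i.e., all facets of Δ have the same dimension. -/
open MvPolynomial

set_option synthInstance.maxHeartbeats 1000000
set_option maxHeartbeats 1000000

/-- A simplicial complex whose vertices lie in `Fin n`: a family of finsets
("faces") containing `∅` and closed under taking subsets.  The vertex set of
the complex is the set of `v` with `{v}` a face. -/
structure SimComplex (n : ℕ) where
  faces : Set (Finset (Fin n))
  empty_mem : ∅ ∈ faces
  down_closed : ∀ {F G : Finset (Fin n)}, F ∈ faces → G ⊆ F → G ∈ faces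

namespace SimComplex

variable {n m : ℕ}

/-- The vertex set of a complex. -/
def vertices (Δ : SimComplex n) : Set (Fin n) := {v | {v} ∈ Δ.faces}

/-- `Δ` is a simplicial complex on the full vertex set `[n] = Fin n`,
i.e. every singleton is a face. -/
def OnFullVertexSet (Δ : SimComplex n) : Prop := ∀ v : Fin n, {v} ∈ Δ.faces

/-- The dimension of a simplicial complex, as an integer:
`max {#F : F a face} - 1`. -/
noncomputable def dim (Δ : SimComplex n) : ℤ :=
  (((Set.toFinite Δ.faces).toFinset.sup (fun F => F.card) : ℕ) : ℤ) - 1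

/-- A facet is a face maximal under inclusion. -/
def IsFacet (Δ : SimComplex n) (F : Finset (Fin n)) : Prop :=
  F ∈ Δ.faces ∧ ∀ G ∈ Δ.faces, F ⊆ G → F = G

/-- A complex is pure if all facets have the same cardinality. -/
def Pure (Δ : SimComplex n) : Prop :=
  ∀ F G : Finset (Fin n), Δ.IsFacet F → Δ.IsFacet G → F.card = G.card

/-- A complex is connected if it is not the union of two nonempty
subcomplexes supported on disjoint nonempty vertex sets. -/
def Connected (Δ : SimComplex n) : Prop :=
  ¬ ∃ V₁ V₂ : Set (Fin n), V₁.Nonempty ∧ V₂.Nonempty ∧ Disjoint V₁ V₂ ∧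
      V₁ ∪ V₂ = Δ.vertices ∧
      ∀ F ∈ Δ.faces, ((F : Set (Fin n)) ⊆ V₁ ∨ (F : Set (Fin n)) ⊆ V₂)

/-- The link of a face `F`:  `link Δ F = {G : G ∪ F ∈ Δ, G ∩ F = ∅}`. -/
def link (Δ : SimComplex n) (F : Finset (Fin n)) (hF : F ∈ Δ.faces) : SimComplex n where
  faces := {G | Disjoint G F ∧ G ∪ F ∈ Δ.faces}
  empty_mem := ⟨Finset.disjoint_empty_left F, by simpa using hF⟩
  down_closed := by
    rintro F' G ⟨hdis, hun⟩ hsub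
    exact ⟨hdis.mono_left hsub,
      Δ.down_closed hun (Finset.union_subset_union hsub (subset_refl F))⟩

/-- The restriction `Δ_W` of `Δ` to a set `W` of vertices. -/
def restrict (Δ : SimComplex n) (W : Set (Fin n)) : SimComplex n where
  faces := {F | F ∈ Δ.faces ∧ (F : Set (Fin n)) ⊆ W}
  empty_mem := ⟨Δ.empty_mem, by simp⟩
  down_closed := by
    rintro F G ⟨hF, hFW⟩ hsub
    exact ⟨Δ.down_closed hF hsub, le_trans (Finset.coe_subset.mpr hsub) hFW⟩

/-- The simplicial complex spanned by a family of finsets. -/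
def ofFamily (H : Set (Finset (Fin n))) : SimComplex n where
  faces := {F | F = ∅ ∨ ∃ G ∈ H, F ⊆ G}
  empty_mem := Or.inl rfl
  down_closed := by
    rintro F G (rfl | ⟨G', hG', hFG⟩) hGF
    · exact Or.inl (Finset.subset_empty.mp hGF)
    · exact Or.inr ⟨G', hG', hGF.trans hFG⟩

/-- The union of two complexes on the same ambient vertex set (used for
complexes supported on disjoint vertex sets). -/
def union (Δ₁ Δ₂ : SimComplex n) : SimComplex n where
  faces := Δ₁.faces ∪ Δ₂.faces
  empty_mem := Or.inl Δ₁.empty_mem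
  down_closed := by
    rintro F G (h | h) hsub
    · exact Or.inl (Δ₁.down_closed h hsub)
    · exact Or.inr (Δ₂.down_closed h hsub)

/-- The `n`-gon: the pure one-dimensional complex with facets
`{i, i+1 (mod n)}`. -/
def nGon (n : ℕ) : SimComplex n :=
  ofFamily {F | ∃ i j : Fin n, (j : ℕ) = ((i : ℕ) + 1) % n ∧ F = {i, j}}

/-- The `n`-pointed path: the one-dimensional complex with facets `{i, i+1}`,
`i = 1, …, n-1`. -/
def nPath (n : ℕ) : SimComplex n :=
  ofFamily {F | ∃ i j : Fin n, (j : ℕ) = (i : ℕ) + 1 ∧ F = {i, j}}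

/-- An isomorphism of simplicial complexes: a relabeling of the vertices
carrying the faces of one complex bijectively onto the faces of the other. -/
def IsIsoTo (Δ : SimComplex n) (Γ : SimComplex m) : Prop :=
  ∃ e : Fin n → Fin m, Set.InjOn e Δ.vertices ∧
    (∀ F : Finset (Fin n), F ∈ Δ.faces → F.image e ∈ Γ.faces) ∧
    (∀ G : Finset (Fin m), G ∈ Γ.faces → ∃ F ∈ Δ.faces, F.image e = G)

/-- A minimal nonface of `Δ`; these index the minimal monomial generators of
the Stanley–Reisner ideal. -/
def IsMinimalNonface (Δ : SimComplex n) (F : Finset (Fin n)) : Prop :=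
  F ∉ Δ.faces ∧ ∀ G : Finset (Fin n), G ⊂ F → G ∈ Δ.faces

/-- The number of facets of maximal dimension; for a Stanley-Reisner ring this
is its multiplicity. -/
noncomputable def facetMult (Δ : SimComplex n) : ℕ :=
  Set.ncard {F : Finset (Fin n) | Δ.IsFacet F ∧ ((F.card : ℤ) - 1 = Δ.dim)}

end SimComplex

/-- An ideal is a complete intersection ideal if it is generated by a regular
sequence. -/
def IsCompleteIntersectionIdeal {R : Type*} [CommRing R] (I : Ideal R) : Prop :=
  ∃ rs : List R, RingTheory.Sequence.IsRegular R rs ∧ I = Ideal.span {x | x ∈ rs}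

/-- The Stanley–Reisner ideal of a complex: the ideal generated by the
squarefree monomials corresponding to nonfaces. -/
noncomputable def srIdeal (K : Type*) [Field K] {n : ℕ} (Δ : SimComplex n) :
    Ideal (MvPolynomial (Fin n) K) :=
  Ideal.span {m | ∃ F : Finset (Fin n), F ∉ Δ.faces ∧ m = ∏ i ∈ F, X i}

/-- A complete intersection complex: one whose Stanley–Reisner ideal is
generated by a regular sequence. -/
def IsCIComplex (K : Type*) [Field K] {n : ℕ} (Δ : SimComplex n) : Prop :=
  IsCompleteIntersectionIdeal (srIdeal K Δ)

/-- A locally complete intersection complex: the Stanley-Reisner ideal of the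
link of every vertex is a complete intersection ideal. -/
def LocallyCI (K : Type*) [Field K] {n : ℕ} (Δ : SimComplex n) : Prop :=
  ∀ (v : Fin n) (h : ({v} : Finset (Fin n)) ∈ Δ.faces), IsCIComplex K (Δ.link {v} h)

/-- A (graded or local) ring is a complete intersection ring if it admits a
presentation as a polynomial ring modulo an ideal generated by a regular
sequence. -/
def IsCompleteIntersectionRing (K : Type*) [Field K] (R : Type*) [CommRing R]
    [Algebra K R] : Prop :=
  ∃ (m : ℕ) (J : Ideal (MvPolynomial (Fin m) K)),
    IsCompleteIntersectionIdeal J ∧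
      Nonempty ((MvPolynomial (Fin m) K ⧸ J) ≃ₐ[K] R)

/-- The depth of a ring `R` with respect to an ideal `J`: the supremum of the
lengths of regular sequences contained in `J`. -/
noncomputable def ringDepth (R : Type*) [CommRing R] (J : Ideal R) : ℕ :=
  sSup {d : ℕ | ∃ rs : List R, rs.length = d ∧ (∀ r ∈ rs, r ∈ J) ∧
    RingTheory.Sequence.IsRegular R rs}

/-- Serre's condition `(S₂)`: `depth R_P ≥ min (dim R_P) 2` for every prime. -/
def SerreS2 (R : Type*) [CommRing R] : Prop :=
  ∀ (P : Ideal R) (hP : P.IsPrime),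
    letI := hP
    min (ringKrullDim (Localization.AtPrime P)) 2 ≤
      (ringDepth (Localization.AtPrime P) (IsLocalRing.maximalIdeal _) : WithBot (WithTop ℕ))

/-- The homogeneous maximal ideal of the quotient of a polynomial ring by a
homogeneous ideal. -/
noncomputable def quotMaxIdeal (K : Type*) [Field K] {n : ℕ} (I : Ideal (MvPolynomial (Fin n) K)) :
    Ideal (MvPolynomial (Fin n) K ⧸ I) :=
  (Ideal.span (Set.range X)).map (Ideal.Quotient.mk I)

/-- A standard graded algebra `S/I` is Cohen–Macaulay iff it admits a regular
sequence, inside the homogeneous maximal ideal, of length equal to its Krull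
dimension. -/
def IsCohenMacaulayQuot (K : Type*) [Field K] {n : ℕ}
    (I : Ideal (MvPolynomial (Fin n) K)) : Prop :=
  ∃ rs : List (MvPolynomial (Fin n) K ⧸ I),
    (∀ r ∈ rs, r ∈ quotMaxIdeal K I) ∧
    RingTheory.Sequence.IsRegular (MvPolynomial (Fin n) K ⧸ I) rs ∧
    ringKrullDim (MvPolynomial (Fin n) K ⧸ I) = rs.length

/-- A standard graded algebra `A = S/I` is Buchsbaum iff every system of
parameters is a weak `A`-sequence (Stückrad–Vogel):
`(x₁, …, x_{i-1}) : x_i ⊆ (x₁, …, x_{i-1}) : 𝔪`. -/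
def IsBuchsbaumQuot (K : Type*) [Field K] {n : ℕ}
    (I : Ideal (MvPolynomial (Fin n) K)) : Prop :=
  ∀ d : ℕ, ringKrullDim (MvPolynomial (Fin n) K ⧸ I) = d →
    ∀ x : Fin d → (MvPolynomial (Fin n) K ⧸ I),
      (∀ i, x i ∈ quotMaxIdeal K I) →
      ringKrullDim ((MvPolynomial (Fin n) K ⧸ I) ⧸ Ideal.span (Set.range x)) ≤ 0 →
      ∀ (i : Fin d) (a : MvPolynomial (Fin n) K ⧸ I),
        a * x i ∈ Ideal.span (x '' {j | j < i}) →
        ∀ b ∈ quotMaxIdeal K I, a * b ∈ Ideal.span (x '' {j | j < i})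

/-- A standard graded algebra `A = S/I` is Gorenstein iff it admits a system of
parameters which is a regular sequence generating an irreducible ideal. -/
def IsGorensteinQuot (K : Type*) [Field K] {n : ℕ}
    (I : Ideal (MvPolynomial (Fin n) K)) : Prop :=
  ∃ rs : List (MvPolynomial (Fin n) K ⧸ I),
    (∀ r ∈ rs, r ∈ quotMaxIdeal K I) ∧
    RingTheory.Sequence.IsRegular (MvPolynomial (Fin n) K ⧸ I) rs ∧
    ringKrullDim (MvPolynomial (Fin n) K ⧸ I) = rs.length ∧
    ∀ J₁ J₂ : Ideal (MvPolynomial (Fin n) K ⧸ I),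
      Ideal.span {x | x ∈ rs} = J₁ ⊓ J₂ →
      Ideal.span {x | x ∈ rs} = J₁ ∨ Ideal.span {x | x ∈ rs} = J₂

/-- The cumulative Hilbert function of `S/I`: the `K`-dimension of the image of
the polynomials of total degree at most `t`. -/
noncomputable def hilbFn (K : Type*) [Field K] {n : ℕ}
    (I : Ideal (MvPolynomial (Fin n) K)) (t : ℕ) : ℕ :=
  Module.finrank K (Submodule.map (Ideal.Quotient.mkₐ K I).toLinearMap
    (MvPolynomial.restrictTotalDegree (Fin n) K t))

/-- `S/I` has (Hilbert–Samuel) multiplicity `e`: writing `d = dim S/I`, the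
cumulative Hilbert function satisfies `dim_K (S/I)_{≤ t} ∼ e·t^d/d!`. -/
def HasMultiplicity (K : Type*) [Field K] {n : ℕ}
    (I : Ideal (MvPolynomial (Fin n) K)) (e : ℕ) : Prop :=
  ∃ d : ℕ, ringKrullDim (MvPolynomial (Fin n) K ⧸ I) = d ∧
    Filter.Tendsto
      (fun t : ℕ => ((d.factorial * hilbFn K I t : ℕ) : ℝ) / (t : ℝ) ^ d)
      Filter.atTop (nhds (e : ℝ))

/-- The Stanley–Reisner ideal of a complex relative to its own vertex set
(generated only by the monomials of nonfaces supported on the vertices). -/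
noncomputable def relSRIdeal (K : Type*) [Field K] {n : ℕ} (Δ : SimComplex n) :
    Ideal (MvPolynomial (Fin n) K) :=
  Ideal.span {m | ∃ F : Finset (Fin n), (F : Set (Fin n)) ⊆ Δ.vertices ∧
    F ∉ Δ.faces ∧ m = ∏ i ∈ F, X i}

/-!
A complete intersection Stanley–Reisner ideal `I_Γ` has pairwise disjoint minimal nonfaces: if
distinct minimal nonfaces `F` and `G` met, the relation `X^(G∖F) X^F = X^(F∖G) X^G` would have its
coefficients in `I_Γ` (relations among a regular sequence are Koszul), so the coefficients
expressing `X^F` through the regular sequence would have no constant term, putting `X^F` in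
`𝔪 I_Γ`, which is impossible for a minimal generator. With disjoint minimal nonfaces, every facet
misses exactly one vertex of each of them, so the complex is pure. Hence all vertex links are
pure, facets through a common vertex have the same size, and connectedness propagates this to all
facets.
-/

namespace RingTheory.Sequence

open Finset

variable {R : Type*} [CommRing R] {rs : List R}

lemma getD_mem_ofList_take {j k : ℕ} (hjk : j < k) : rs.getD j 0 ∈ Ideal.ofList (rs.take k) := by
  by_cases hj : j < rs.length
  · rw [List.getD_eq_getElem _ _ hj, ← List.getElem_take (j := k) (h := by simp; omega)]
    exact Ideal.subset_span (List.getElem_mem _)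
  · rw [List.getD_eq_default _ _ (by omega)]
    exact zero_mem _

lemma exists_sum_eq_of_mem_ofList_take {k : ℕ} {x : R} (hx : x ∈ Ideal.ofList (rs.take k)) :
    ∃ c : ℕ → R, ∑ j ∈ range k, c j * rs.getD j 0 = x := by
  induction hx using Submodule.span_induction with
  | mem y hy =>
    obtain ⟨j, hj, rfl⟩ := List.getElem_of_mem hy
    refine ⟨fun i => if i = j then 1 else 0, ?_⟩
    obtain ⟨hjk, hjl⟩ : j < k ∧ j < rs.length := by simpa using hj
    simp [hjk, hjl]
  | zero => exact ⟨0, by simp⟩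
  | add y z _ _ hy hz =>
    obtain ⟨c, rfl⟩ := hy
    obtain ⟨d, rfl⟩ := hz
    exact ⟨c + d, by simp [add_mul, sum_add_distrib]⟩
  | smul a y _ hy =>
    obtain ⟨c, rfl⟩ := hy
    exact ⟨a • c, by simp [mul_sum, mul_assoc]⟩

lemma IsWeaklyRegular.mem_ofList_take_of_mul_mem (h : IsWeaklyRegular R rs) {k : ℕ}
    (hk : k < rs.length) {x : R} (hx : x * rs[k] ∈ Ideal.ofList (rs.take k)) :
    x ∈ Ideal.ofList (rs.take k) := by
  have hreg := (isSMulRegular_quotient_iff_mem_of_smul_mem _ _).mp (h.regular_mod_prev k hk) x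
  rw [Ideal.smul_eq_mul, Ideal.mul_top, smul_eq_mul, mul_comm] at hreg
  exact hreg hx

theorem IsWeaklyRegular.mem_ofList_take_of_sum_eq_zero (h : IsWeaklyRegular R rs) {k : ℕ}
    (hk : k ≤ rs.length) {a : ℕ → R} (hs : ∑ i ∈ range k, a i * rs.getD i 0 = 0) {i : ℕ}
    (hi : i < k) : a i ∈ Ideal.ofList (rs.take k) := by
  induction k generalizing a i with
  | zero => omega
  | succ k ih =>
    set r := rs.getD k 0
    rw [sum_range_succ] at hs
    have hmono : Ideal.ofList (rs.take k) ≤ Ideal.ofList (rs.take (k + 1)) :=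
      Ideal.span_mono fun x hx => List.take_subset_take_left rs k.le_succ hx
    have hak : a k ∈ Ideal.ofList (rs.take k) := by
      refine h.mem_ofList_take_of_mul_mem hk ?_
      rw [← List.getD_eq_getElem _ 0, eq_neg_of_add_eq_zero_right hs]
      exact neg_mem (sum_mem fun j hj =>
        Ideal.mul_mem_left _ _ (getD_mem_ofList_take (mem_range.mp hj)))
    obtain ⟨c, hc⟩ := exists_sum_eq_of_mem_ofList_take hak
    have hs' : ∑ j ∈ range k, (a j + c j * r) * rs.getD j 0 = 0 := by
      calc ∑ j ∈ range k, (a j + c j * r) * rs.getD j 0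
          = ∑ j ∈ range k, a j * rs.getD j 0 + (∑ j ∈ range k, c j * rs.getD j 0) * r := by
            rw [sum_mul, ← sum_add_distrib]
            exact sum_congr rfl fun j _ => by ring
        _ = 0 := by rw [hc]; linear_combination hs
    obtain hi | rfl := Nat.lt_succ_iff_lt_or_eq.mp hi
    · have hr : r ∈ Ideal.ofList (rs.take (k + 1)) := getD_mem_ofList_take k.lt_succ_self
      rw [← add_sub_cancel_right (a i) (c i * r)]
      exact sub_mem (hmono (ih (by omega) hs' hi)) (Ideal.mul_mem_left _ _ hr)
    · exact hmono hak

end RingTheory.Sequence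

namespace MvPolynomial

open Finset

variable {σ : Type*}

noncomputable def squarefreeExp (F : Finset σ) : σ →₀ ℕ := ∑ i ∈ F, Finsupp.single i 1

lemma squarefreeExp_apply [DecidableEq σ] (F : Finset σ) (j : σ) :
    squarefreeExp F j = if j ∈ F then 1 else 0 := by
  simp [squarefreeExp, Finsupp.finsetSum_apply, Finsupp.single_apply]

@[simp]
lemma support_squarefreeExp [DecidableEq σ] (F : Finset σ) : (squarefreeExp F).support = F := by
  ext j
  simp [squarefreeExp_apply]

lemma squarefreeExp_le_iff [DecidableEq σ] {F : Finset σ} {d : σ →₀ ℕ} :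
    squarefreeExp F ≤ d ↔ F ⊆ d.support := by
  simp only [Finsupp.le_def, squarefreeExp_apply, subset_iff, Finsupp.mem_support_iff]
  refine forall_congr' fun j => ?_
  split_ifs with hj <;> simp [hj, Nat.one_le_iff_ne_zero]

lemma prod_X_eq_monomial_squarefreeExp {R : Type*} [CommSemiring R] (F : Finset σ) :
    ∏ i ∈ F, (X i : MvPolynomial σ R) = monomial (squarefreeExp F) 1 :=
  (monomial_sum_one F _).symm

end MvPolynomial

namespace SimComplex

open MvPolynomial Finset

variable {K : Type*} [Field K] {n : ℕ} {Γ : SimComplex n}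

lemma mem_srIdeal_iff {f : MvPolynomial (Fin n) K} :
    f ∈ srIdeal K Γ ↔ ∀ d ∈ f.support, d.support ∉ Γ.faces := by
  have hspan : srIdeal K Γ =
      Ideal.span ((fun s => monomial s 1) '' (squarefreeExp '' {F | F ∉ Γ.faces})) := by
    rw [srIdeal, Set.image_image]
    congr 1
    ext m
    simp [prod_X_eq_monomial_squarefreeExp, eq_comm]
  rw [hspan, mem_ideal_span_monomial_image]
  refine forall₂_congr fun d _ =>
    ⟨?_, fun hd => ⟨_, ⟨d.support, hd, rfl⟩, squarefreeExp_le_iff.2 subset_rfl⟩⟩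
  rintro ⟨_, ⟨F, hF, rfl⟩, hle⟩ hd
  exact hF (Γ.down_closed hd (squarefreeExp_le_iff.1 hle))

lemma coeff_eq_zero_of_mem_srIdeal {f : MvPolynomial (Fin n) K} (hf : f ∈ srIdeal K Γ)
    {d : Fin n →₀ ℕ} (hd : d.support ∈ Γ.faces) : coeff d f = 0 := by
  by_contra h
  exact mem_srIdeal_iff.1 hf d (mem_support_iff.2 h) hd

lemma prod_X_mem_srIdeal {F : Finset (Fin n)} (hF : F ∉ Γ.faces) :
    ∏ i ∈ F, (X i : MvPolynomial (Fin n) K) ∈ srIdeal K Γ :=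
  Ideal.subset_span ⟨F, hF, rfl⟩

lemma coeff_squarefreeExp_mul_eq_zero {F : Finset (Fin n)} (hF : Γ.IsMinimalNonface F)
    {p f : MvPolynomial (Fin n) K} (hp : constantCoeff p = 0) (hf : f ∈ srIdeal K Γ) :
    coeff (squarefreeExp F) (p * f) = 0 := by
  rw [coeff_mul]
  refine sum_eq_zero fun d hd => ?_
  rw [HasAntidiagonal.mem_antidiagonal] at hd
  obtain h1 | h1 := eq_or_ne d.1 0
  · rw [h1, ← constantCoeff_eq, hp, zero_mul]
  obtain ⟨j, hj⟩ : ∃ j, d.1 j ≠ 0 := by simpa using Finsupp.ne_iff.mp h1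
  -- `d.1 ≠ 0` makes `d.2` supported on a proper subset of `F`, which is a face
  refine mul_eq_zero_of_right _ (coeff_eq_zero_of_mem_srIdeal hf (hF.2 _ ?_))
  have hdj := DFunLike.congr_fun hd j
  simp only [Finsupp.add_apply, squarefreeExp_apply] at hdj
  have hjF : j ∈ F := by
    by_contra hjF
    rw [if_neg hjF] at hdj
    omega
  refine (ssubset_iff_of_subset ?_).2 ⟨j, hjF, ?_⟩
  · simpa using Finsupp.support_mono (hd ▸ le_add_self : d.2 ≤ squarefreeExp F)
  · rw [if_pos hjF] at hdj
    rw [Finsupp.notMem_support_iff]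
    omega

/-- The coefficient at `X^A` is `constantCoeff p`. -/
lemma constantCoeff_eq_zero_of_prod_X_mul_sub_mem_srIdeal {A B : Finset (Fin n)}
    (hA : A ∈ Γ.faces) (hBA : ¬ B ⊆ A) {p q : MvPolynomial (Fin n) K}
    (h : (∏ i ∈ A, X i) * p - (∏ i ∈ B, X i) * q ∈ srIdeal K Γ) : constantCoeff p = 0 := by
  have := coeff_eq_zero_of_mem_srIdeal h (d := squarefreeExp A) (by simpa using hA)
  rwa [coeff_sub, prod_X_eq_monomial_squarefreeExp, prod_X_eq_monomial_squarefreeExp,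
    coeff_monomial_mul', coeff_monomial_mul', if_pos le_rfl, if_neg (by rwa [squarefreeExp_le_iff,
    support_squarefreeExp]), one_mul, sub_zero, tsub_self, ← constantCoeff_eq] at this

end SimComplex

open MvPolynomial Finset RingTheory.Sequence SimComplex in
theorem IsCIComplex.disjoint_of_isMinimalNonface {K : Type*} [Field K] {n : ℕ}
    {Γ : SimComplex n} (hci : IsCIComplex K Γ)
    {F G : Finset (Fin n)} (hF : Γ.IsMinimalNonface F) (hG : Γ.IsMinimalNonface G)
    (hne : F ≠ G) : Disjoint F G := by
  obtain ⟨rs, hreg, hI⟩ := hci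
  rw [← List.take_length (l := rs)] at hI
  change srIdeal K Γ = Ideal.ofList _ at hI
  rw [Finset.disjoint_left]
  intro x hxF hxG
  obtain ⟨y, hyF, hyG⟩ : ∃ y ∈ F, y ∉ G :=
    not_subset.1 fun h => hF.1 (hG.2 F (ssubset_of_subset_of_ne h hne))
  have hGF : G \ F ∈ Γ.faces :=
    hG.2 _ ((ssubset_iff_of_subset sdiff_subset).2 ⟨x, hxG, by simp [hxF]⟩)
  obtain ⟨p, hp⟩ := exists_sum_eq_of_mem_ofList_take (hI ▸ prod_X_mem_srIdeal (K := K) hF.1)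
  obtain ⟨q, hq⟩ := exists_sum_eq_of_mem_ofList_take (hI ▸ prod_X_mem_srIdeal (K := K) hG.1)
  have hsyz : ∑ i ∈ range rs.length,
      ((∏ j ∈ G \ F, X j) * p i - (∏ j ∈ F \ G, X j) * q i) * rs.getD i 0 = 0 := by
    simp only [sub_mul, sum_sub_distrib, mul_assoc, ← mul_sum, hp, hq]
    rw [← prod_union sdiff_disjoint, ← prod_union sdiff_disjoint, sdiff_union_self_eq_union,
      sdiff_union_self_eq_union, union_comm, sub_self]
  have hconst : ∀ i < rs.length, constantCoeff (p i) = 0 := fun i hi =>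
    constantCoeff_eq_zero_of_prod_X_mul_sub_mem_srIdeal hGF
      (fun h => (h (mem_sdiff.2 ⟨hyF, hyG⟩) |> mem_sdiff.1).2 hyF)
      (hI ▸ hreg.toIsWeaklyRegular.mem_ofList_take_of_sum_eq_zero le_rfl hsyz hi)
  have hcoeff := congr_arg (coeff (squarefreeExp F)) hp
  rw [coeff_sum, sum_eq_zero fun i hi => coeff_squarefreeExp_mul_eq_zero hF
    (hconst i (mem_range.1 hi)) (hI ▸ getD_mem_ofList_take (mem_range.1 hi)),
    prod_X_eq_monomial_squarefreeExp, coeff_monomial, if_pos rfl] at hcoeff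
  exact zero_ne_one hcoeff

namespace SimComplex

open Finset

variable {n : ℕ} {Δ : SimComplex n}

lemma mem_vertices_of_mem {F : Finset (Fin n)} (hF : F ∈ Δ.faces) {v : Fin n} (hv : v ∈ F) :
    v ∈ Δ.vertices :=
  Δ.down_closed hF (singleton_subset_iff.2 hv)

lemma exists_isFacet_superset {F : Finset (Fin n)} (hF : F ∈ Δ.faces) :
    ∃ G, Δ.IsFacet G ∧ F ⊆ G := by
  obtain ⟨G, hFG, hG⟩ := Set.toFinite Δ.faces |>.exists_le_maximal hF
  exact ⟨G, ⟨hG.1, fun H hH hGH => le_antisymm hGH (hG.2 hH hGH)⟩, hFG⟩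

lemma exists_isMinimalNonface_subset {F : Finset (Fin n)} (hF : F ∉ Δ.faces) :
    ∃ N ⊆ F, Δ.IsMinimalNonface N := by
  obtain ⟨N, hNF, hN⟩ := Set.toFinite {G | G ∉ Δ.faces} |>.exists_le_minimal hF
  refine ⟨N, hNF, hN.1, fun G hGN => ?_⟩
  by_contra hG
  exact hGN.not_ge (hN.2 hG hGN.le)

lemma IsFacet.exists_isMinimalNonface_insert {A : Finset (Fin n)} (hA : Δ.IsFacet A)
    {v : Fin n} (hv : v ∉ A) : ∃ N, Δ.IsMinimalNonface N ∧ v ∈ N ∧ N ⊆ insert v A := by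
  have hnf : insert v A ∉ Δ.faces := fun h =>
    hv ((hA.2 _ h (subset_insert v A)).symm ▸ mem_insert_self v A)
  obtain ⟨N, hNA, hN⟩ := exists_isMinimalNonface_subset hnf
  refine ⟨N, hN, ?_, hNA⟩
  by_contra hvN
  exact hN.1 (Δ.down_closed hA.1 fun w hw =>
    (mem_insert.1 (hNA hw)).resolve_left (ne_of_mem_of_not_mem hw hvN))

/-- With pairwise disjoint minimal nonfaces, `v ↦` (the minimal nonface inside `A ∪ {v}`) is a
bijection from the vertices outside a facet `A` onto the minimal nonfaces on the vertex set. -/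
lemma IsFacet.ncard_vertices_sdiff_eq {A : Finset (Fin n)} (hA : Δ.IsFacet A)
    (h : ∀ F G, Δ.IsMinimalNonface F → Δ.IsMinimalNonface G → F ≠ G → Disjoint F G) :
    (Δ.vertices \ A).ncard = {N | Δ.IsMinimalNonface N ∧ ↑N ⊆ Δ.vertices}.ncard := by
  choose! f hfN hvf hfA using fun v (hv : v ∉ A) => hA.exists_isMinimalNonface_insert hv
  refine Set.ncard_congr (fun v _ => f v) (fun v hv => ⟨hfN v hv.2, fun w hw => ?_⟩) ?_ ?_
  · obtain rfl | hwA := mem_insert.1 (hfA v hv.2 hw)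
    exacts [hv.1, mem_vertices_of_mem hA.1 hwA]
  · intro v w hv hw hvw
    have := hfA v hv.2 (hvw ▸ hvf w hw.2)
    exact ((mem_insert.1 this).resolve_right hw.2).symm
  · rintro N ⟨hN, hNV⟩
    obtain ⟨v, hvN, hvA⟩ := not_subset.1 fun hNA => hN.1 (Δ.down_closed hA.1 hNA)
    refine ⟨v, ⟨hNV hvN, hvA⟩, ?_⟩
    by_contra hne
    exact disjoint_left.1 (h _ _ (hfN v hvA) hN hne) (hvf v hvA) hvN

theorem pure_of_disjoint_isMinimalNonface
    (h : ∀ F G, Δ.IsMinimalNonface F → Δ.IsMinimalNonface G → F ≠ G → Disjoint F G) :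
    Δ.Pure := by
  have hcard : ∀ A, Δ.IsFacet A →
      {N | Δ.IsMinimalNonface N ∧ ↑N ⊆ Δ.vertices}.ncard + A.card = Δ.vertices.ncard :=
    fun A hA => by
      rw [← hA.ncard_vertices_sdiff_eq h, ← Set.ncard_coe_finset]
      exact Set.ncard_sdiff_add_ncard_of_subset (fun v => mem_vertices_of_mem hA.1) (Set.toFinite _)
  intro A B hA hB
  have := (hcard A hA).trans (hcard B hB).symm
  omega

lemma IsFacet.erase_isFacet_link {F : Finset (Fin n)} (hF : Δ.IsFacet F) {v : Fin n}
    (hvF : v ∈ F) (hv : {v} ∈ Δ.faces) : (Δ.link {v} hv).IsFacet (F.erase v) := by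
  have herase : F.erase v ∪ {v} = F := by rw [union_singleton, insert_erase hvF]
  refine ⟨⟨disjoint_singleton_right.2 (notMem_erase v F), by rw [herase]; exact hF.1⟩, ?_⟩
  rintro G ⟨hGv, hG⟩ hFG
  have hGF : F = G ∪ {v} := hF.2 _ hG (herase ▸ union_subset_union hFG subset_rfl)
  refine hFG.antisymm fun w hw => mem_erase.2 ⟨?_, hGF ▸ mem_union_left _ hw⟩
  rintro rfl
  exact disjoint_singleton_right.1 hGv hw

lemma Pure.card_eq_of_link {v : Fin n} {hv : {v} ∈ Δ.faces} (hpure : (Δ.link {v} hv).Pure)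
    {A B : Finset (Fin n)} (hA : Δ.IsFacet A) (hB : Δ.IsFacet B) (hvA : v ∈ A) (hvB : v ∈ B) :
    A.card = B.card := by
  rw [← card_erase_add_one hvA, ← card_erase_add_one hvB,
    hpure _ _ (hA.erase_isFacet_link hvA hv) (hB.erase_isFacet_link hvB hv)]

lemma Connected.apply_eq_apply {α : Type*} (hconn : Δ.Connected) (f : Fin n → α)
    (hf : ∀ H ∈ Δ.faces, ∀ v ∈ H, ∀ w ∈ H, f v = f w) {v w : Fin n} (hv : v ∈ Δ.vertices)
    (hw : w ∈ Δ.vertices) : f v = f w := by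
  by_contra hne
  refine hconn ⟨{u ∈ Δ.vertices | f u = f v}, {u ∈ Δ.vertices | f u ≠ f v}, ⟨v, hv, rfl⟩,
    ⟨w, hw, Ne.symm hne⟩, Set.disjoint_left.2 fun u h₁ h₂ => h₂.2 h₁.2, ?_, fun H hH => ?_⟩
  · ext u
    simp only [Set.mem_union, Set.mem_sep_iff]
    tauto
  by_cases hHv : ∃ u ∈ H, f u = f v
  · obtain ⟨u, hu, hfu⟩ := hHv
    exact Or.inl fun u' hu' => ⟨mem_vertices_of_mem hH hu', (hf H hH u' hu' u hu).trans hfu⟩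
  · exact Or.inr fun u' hu' => ⟨mem_vertices_of_mem hH hu', fun h => hHv ⟨u', hu', h⟩⟩

lemma Connected.pure_of_card_eq (hconn : Δ.Connected)
    (h : ∀ A B, Δ.IsFacet A → Δ.IsFacet B → ∀ v ∈ A, v ∈ B → A.card = B.card) : Δ.Pure := by
  intro F G hF hG
  obtain rfl | ⟨v, hvF⟩ := F.eq_empty_or_nonempty
  · rw [hF.2 G hG.1 (empty_subset G)]
  obtain rfl | ⟨w, hwG⟩ := G.eq_empty_or_nonempty
  · rw [hG.2 F hF.1 (empty_subset F)]
  have hsame : ∀ H ∈ Δ.faces, ∀ u ∈ H, ∀ u' ∈ H,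
      (∃ A, Δ.IsFacet A ∧ u ∈ A ∧ A.card = F.card) =
        (∃ A, Δ.IsFacet A ∧ u' ∈ A ∧ A.card = F.card) := by
    intro H hH u hu u' hu'
    obtain ⟨B, hB, hHB⟩ := exists_isFacet_superset hH
    have hiff : ∀ x ∈ H, (∃ A, Δ.IsFacet A ∧ x ∈ A ∧ A.card = F.card) ↔ B.card = F.card :=
      fun x hx => ⟨fun ⟨A, hA, hxA, hAF⟩ => (h B A hB hA x (hHB hx) hxA).trans hAF,
        fun hBF => ⟨B, hB, hHB hx, hBF⟩⟩
    exact propext ((hiff u hu).trans (hiff u' hu').symm)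
  obtain ⟨A, hA, hwA, hAF⟩ := cast (hconn.apply_eq_apply _ hsame (mem_vertices_of_mem hF.1 hvF)
    (mem_vertices_of_mem hG.1 hwG)) ⟨F, hF, hvF, rfl⟩
  exact hAF.symm.trans (h A G hA hG w hwA hwG)

end SimComplex

theorem pure_of_connected_of_locallyCI_general (K : Type) [Field K] {n : ℕ}
    (Δ : SimComplex n) (hconn : Δ.Connected)
    (hlci : LocallyCI K Δ) : Δ.Pure := by
  refine hconn.pure_of_card_eq fun A B hA hB v hvA hvB => ?_
  have hv : {v} ∈ Δ.faces := SimComplex.mem_vertices_of_mem hA.1 hvA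
  have hpure : (Δ.link {v} hv).Pure := SimComplex.pure_of_disjoint_isMinimalNonface
    fun F G hF hG hne => (hlci v hv).disjoint_of_isMinimalNonface hF hG hne
  exact hpure.card_eq_of_link hA hB hvA hvB

/-- **Corollary 1.3.** A connected locally complete intersection complex is
pure. -/
theorem pure_of_connected_of_locallyCI (K : Type) [Field K] {n : ℕ}
    (Δ : SimComplex n) (hfull : Δ.OnFullVertexSet) (hconn : Δ.Connected)
    (hlci : LocallyCI K Δ) : Δ.Pure :=
  pure_of_connected_of_locallyCI_general K Δ hconn hlci
end

section
/- Let Δ be a locally complete intersection simplicial complex on V and let x_1, x_2, y ∈ V be distinct vertices with X_1Y ∈ I_Δ and X_2Y ∈ I_Δ (where capital letters denote the variables corresponding to the vertices). Then for every vertex z ∈ V ∖ {x_1,x_2,y}, at least one of the monomials X_1Z, X_2Z, YZ belongs to I_Δ. -/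
open MvPolynomial

set_option synthInstance.maxHeartbeats 1000000
set_option maxHeartbeats 1000000

/-!
Suppose `z` is joined to `x₁`, `x₂` and `y`. In the link `Γ` of `z` the vertices `x₁`, `x₂`, `y`
survive while `{x₁, y}` and `{x₂, y}` stay nonfaces. If `I_Γ = (f₁, …, f_r)` for a regular
sequence, write `X₁Y = ∑ aᵢ fᵢ` and `X₂Y = ∑ bᵢ fᵢ`; the syzygy `∑ (X₂aᵢ - X₁bᵢ) fᵢ = 0` has its
coefficients in `I_Γ`, so every `aᵢ` lies in `(I_Γ + (X₁)) : X₂`, which has no constant terms.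
Hence `X₁Y ∈ 𝔪 I_Γ`, contradicting that the monomial of a minimal nonface is a minimal generator.
The monomial facts come from substituting `0` for the variables outside a finset `W`: this kills
`I_Γ` when `W` is a face and sends it into `(∏_{i ∈ W} Xᵢ)` when all proper subsets of `W` are.
-/

open RingTheory.Sequence in
theorem mem_span_range_of_sum_mul_eq_zero {R : Type*} [CommRing R] :
    ∀ {k : ℕ} (f : Fin k → R), IsWeaklyRegular R (List.ofFn f) →
      ∀ c : Fin k → R, ∑ i, c i * f i = 0 → ∀ i, c i ∈ Ideal.span (Set.range f)
  | 0, _, _, _, _, i => i.elim0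
  | k + 1, f, hf, c, hc, i => by
    set I := Ideal.span (Set.range fun j : Fin k => f j.castSucc)
    have hofList : Ideal.ofList (List.ofFn fun j : Fin k => f j.castSucc) = I :=
      congrArg Ideal.span (Set.ext fun r => List.mem_ofFn' _ r)
    rw [List.ofFn_succ', List.concat_eq_append, isWeaklyRegular_append_iff,
      isWeaklyRegular_singleton_iff, hofList, Ideal.smul_eq_mul, Ideal.mul_top] at hf
    obtain ⟨hinit, hlast⟩ := hf
    rw [Fin.sum_univ_castSucc] at hc
    -- The last element is regular modulo the others, so its coefficient lies in their ideal and
    -- can be absorbed into their coefficients.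
    have hclast : c (Fin.last k) ∈ I := by
      refine mem_of_isSMulRegular_quotient_of_smul_mem hlast ?_
      rw [smul_eq_mul, mul_comm, eq_neg_of_add_eq_zero_right hc]
      exact neg_mem (Ideal.sum_mem _ fun j _ => Ideal.mul_mem_left _ _ (Ideal.subset_span ⟨j, rfl⟩))
    obtain ⟨d, hd⟩ := Ideal.mem_span_range_iff_exists_fun.mp hclast
    have hshift : ∑ j, (c j.castSucc + d j * f (Fin.last k)) * f j.castSucc = 0 := by
      simp only [add_mul, Finset.sum_add_distrib, mul_right_comm _ (f (Fin.last k)),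
        ← Finset.sum_mul, hd, hc]
    have hIle : I ≤ Ideal.span (Set.range f) :=
      Ideal.span_mono (Set.range_comp_subset_range _ _)
    have hflast : f (Fin.last k) ∈ Ideal.span (Set.range f) := Ideal.subset_span ⟨_, rfl⟩
    induction i using Fin.lastCases with
    | last => exact hIle hclast
    | cast j =>
      have hj := mem_span_range_of_sum_mul_eq_zero _ hinit _ hshift j
      rw [← add_sub_cancel_right (c j.castSucc) (d j * f (Fin.last k))]
      exact sub_mem (hIle hj) (Ideal.mul_mem_left _ _ hflast)

open RingTheory.Sequence in
theorem mem_colon_mul_of_mul_eq_mul {R : Type*} [CommRing R] {k : ℕ} {f : Fin k → R}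
    (hf : IsWeaklyRegular R (List.ofFn f)) {u v g₁ g₂ : R}
    (hg₁ : g₁ ∈ Ideal.span (Set.range f)) (hg₂ : g₂ ∈ Ideal.span (Set.range f))
    (huv : v * g₁ = u * g₂) :
    g₁ ∈ (Ideal.span (Set.range f) ⊔ Ideal.span {u}).colon {v} * Ideal.span (Set.range f) := by
  obtain ⟨a, rfl⟩ := Ideal.mem_span_range_iff_exists_fun.mp hg₁
  obtain ⟨b, rfl⟩ := Ideal.mem_span_range_iff_exists_fun.mp hg₂
  have hsyz : ∑ i, (v * a i - u * b i) * f i = 0 := by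
    simp only [sub_mul, Finset.sum_sub_distrib, mul_assoc, ← Finset.mul_sum, huv, sub_self]
  refine Ideal.sum_mem _ fun i _ => Ideal.mul_mem_mul ?_ (Ideal.subset_span ⟨i, rfl⟩)
  rw [Submodule.mem_colon_singleton, smul_eq_mul, mul_comm, ← sub_add_cancel (v * a i) (u * b i)]
  exact add_mem (Ideal.mem_sup_left (mem_span_range_of_sum_mul_eq_zero f hf _ hsyz i))
    (Ideal.mem_sup_right (Ideal.mul_mem_right _ _ (Ideal.mem_span_singleton_self u)))

namespace MvPolynomial

variable {σ R : Type*} [CommSemiring R] [DecidableEq σ]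

noncomputable def restrictVars (W : Finset σ) : MvPolynomial σ R →ₐ[R] MvPolynomial σ R :=
  aeval fun i => if i ∈ W then X i else 0

theorem restrictVars_X (W : Finset σ) (i : σ) :
    restrictVars W (X i : MvPolynomial σ R) = if i ∈ W then X i else 0 :=
  aeval_X _ i

theorem restrictVars_prod_X (W F : Finset σ) :
    restrictVars W (∏ i ∈ F, X i : MvPolynomial σ R) = if F ⊆ W then ∏ i ∈ F, X i else 0 := by
  rw [map_prod]
  split_ifs with hFW
  · exact Finset.prod_congr rfl fun i hi => by rw [restrictVars_X, if_pos (hFW hi)]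
  · obtain ⟨i, hiF, hiW⟩ := Finset.not_subset.mp hFW
    exact Finset.prod_eq_zero hiF (by rw [restrictVars_X, if_neg hiW])

theorem constantCoeff_restrictVars (W : Finset σ) (p : MvPolynomial σ R) :
    constantCoeff (restrictVars W p) = constantCoeff p := by
  induction p using MvPolynomial.induction_on with
  | C a => simp
  | add p q hp hq => simp only [map_add, hp, hq]
  | mul_X p i hp => simp only [map_mul, hp, restrictVars_X]; split_ifs <;> simp

end MvPolynomial

section StanleyReisner

open Ideal

variable {K : Type*} [Field K] {n : ℕ} {Δ : SimComplex n}

theorem srIdeal_le_ker_restrictVars {W : Finset (Fin n)} (hW : W ∈ Δ.faces) :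
    srIdeal K Δ ≤ RingHom.ker (restrictVars W) := by
  refine span_le.mpr ?_
  rintro _ ⟨F, hF, rfl⟩
  rw [SetLike.mem_coe, RingHom.mem_ker, restrictVars_prod_X,
    if_neg fun hFW => hF (Δ.down_closed hW hFW)]

theorem map_restrictVars_srIdeal_le {W : Finset (Fin n)} (hW : ∀ G ⊂ W, G ∈ Δ.faces) :
    (srIdeal K Δ).map (restrictVars W) ≤ span {∏ i ∈ W, X i} := by
  rw [srIdeal, map_span, span_le]
  rintro _ ⟨_, ⟨F, hF, rfl⟩, rfl⟩
  rw [SetLike.mem_coe, restrictVars_prod_X]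
  split_ifs with hFW
  · obtain rfl : F = W := hFW.eq_of_not_ssubset fun hFW' => hF (hW F hFW')
    exact mem_span_singleton_self _
  · exact zero_mem _

theorem prod_X_notMem_srIdeal {F : Finset (Fin n)} (hF : F ∈ Δ.faces) :
    ∏ i ∈ F, X i ∉ srIdeal K Δ := fun h => by
  have := srIdeal_le_ker_restrictVars hF h
  rw [RingHom.mem_ker, restrictVars_prod_X, if_pos subset_rfl] at this
  exact Finset.prod_ne_zero_iff.mpr (fun i _ => X_ne_zero i) this

theorem X_mul_X_mem_srIdeal_iff {u v : Fin n} (huv : u ≠ v) :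
    X u * X v ∈ srIdeal K Δ ↔ {u, v} ∉ Δ.faces := by
  rw [← Finset.prod_pair huv]
  exact ⟨fun h hF => prod_X_notMem_srIdeal hF h, fun hF => subset_span ⟨_, hF, rfl⟩⟩

theorem prod_X_notMem_ker_constantCoeff_mul_srIdeal {W : Finset (Fin n)}
    (hW : ∀ G ⊂ W, G ∈ Δ.faces) :
    ∏ i ∈ W, X i ∉ RingHom.ker constantCoeff * srIdeal K Δ := fun h => by
  have hmap := mem_map_of_mem (restrictVars W) h
  rw [Ideal.map_mul, restrictVars_prod_X, if_pos subset_rfl] at hmap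
  have hker : (RingHom.ker constantCoeff).map (restrictVars W) ≤
      RingHom.ker (constantCoeff : MvPolynomial (Fin n) K →+* K) :=
    map_le_iff_le_comap.mpr fun p hp => by
      rwa [mem_comap, RingHom.mem_ker, constantCoeff_restrictVars]
  obtain ⟨z, hz, hzW⟩ :=
    mem_mul_span_singleton.mp (mul_mono hker (map_restrictVars_srIdeal_le hW) hmap)
  have hz1 : z = 1 := mul_right_cancel₀ (Finset.prod_ne_zero_iff.mpr fun i _ => X_ne_zero i)
    (hzW.trans (one_mul _).symm)
  rw [hz1, RingHom.mem_ker, map_one] at hz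
  exact one_ne_zero hz

theorem srIdeal_sup_span_X_colon_X_le_ker_constantCoeff {x₁ x₂ : Fin n} (h12 : x₁ ≠ x₂)
    (hx₂ : {x₂} ∈ Δ.faces) :
    (srIdeal K Δ ⊔ span {X x₁}).colon {X x₂} ≤ RingHom.ker constantCoeff := by
  intro a ha
  rw [Submodule.mem_colon_singleton, smul_eq_mul] at ha
  have hX₁ : X x₁ ∈ RingHom.ker (restrictVars {x₂} : MvPolynomial (Fin n) K →ₐ[K] _) := by
    rw [RingHom.mem_ker, restrictVars_X, if_neg (Finset.notMem_singleton.mpr h12)]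
  have hker := sup_le (srIdeal_le_ker_restrictVars hx₂) (span_le.mpr (by simpa using hX₁)) ha
  rw [RingHom.mem_ker, map_mul, restrictVars_X, if_pos (Finset.mem_singleton_self _),
    mul_eq_zero, or_iff_left (X_ne_zero _)] at hker
  rw [RingHom.mem_ker, ← constantCoeff_restrictVars {x₂}, hker, map_zero]

end StanleyReisner

namespace SimComplex

variable {n : ℕ} {Δ : SimComplex n}

theorem mem_faces_of_ssubset_pair {a b : Fin n} (ha : {a} ∈ Δ.faces) (hb : {b} ∈ Δ.faces)
    {G : Finset (Fin n)} (hG : G ⊂ {a, b}) : G ∈ Δ.faces := by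
  obtain ⟨w, hw, hwG⟩ := Finset.exists_of_ssubset hG
  have hGw : G ⊆ ({a, b} : Finset (Fin n)).erase w := fun v hv =>
    Finset.mem_erase.mpr ⟨fun hvw => hwG (hvw ▸ hv), hG.subset hv⟩
  rcases Finset.mem_insert.mp hw with rfl | hwb
  · exact Δ.down_closed hb (hGw.trans (Finset.erase_insert_subset _ _))
  · rw [Finset.mem_singleton.mp hwb, Finset.pair_comm] at hGw
    exact Δ.down_closed ha (hGw.trans (Finset.erase_insert_subset _ _))

theorem singleton_mem_link {v z : Fin n} (hz : {z} ∈ Δ.faces) (hvz : v ≠ z)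
    (h : {v, z} ∈ Δ.faces) : {v} ∈ (Δ.link {z} hz).faces :=
  ⟨Finset.disjoint_singleton.mpr hvz, by rwa [← Finset.insert_eq]⟩

theorem notMem_link_of_notMem {F G : Finset (Fin n)} (hF : F ∈ Δ.faces) (hG : G ∉ Δ.faces) :
    G ∉ (Δ.link F hF).faces :=
  fun hG' => hG (Δ.down_closed hG'.2 Finset.subset_union_left)

end SimComplex

open RingTheory.Sequence in
theorem not_isCIComplex_of_pair_notMem_of_pair_notMem (K : Type*) [Field K] {n : ℕ}
    {Δ : SimComplex n} {x₁ x₂ y : Fin n} (h12 : x₁ ≠ x₂)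
    (hx₁ : {x₁} ∈ Δ.faces) (hx₂ : {x₂} ∈ Δ.faces) (hy : {y} ∈ Δ.faces)
    (h1y : {x₁, y} ∉ Δ.faces) (h2y : {x₂, y} ∉ Δ.faces) :
    ¬ IsCIComplex K Δ := by
  rintro ⟨rs, hrs, hI⟩
  have hne : ∀ {x}, {x} ∈ Δ.faces → {x, y} ∉ Δ.faces → x ≠ y := by
    rintro x hx hxy rfl
    exact hxy (by rwa [Finset.pair_eq_singleton])
  have hI' : srIdeal K Δ = Ideal.span (Set.range rs.get) := by
    rw [hI, Set.range_list_get]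
  have hrs' : IsWeaklyRegular (MvPolynomial (Fin n) K) (List.ofFn rs.get) := by
    rw [List.ofFn_get]; exact hrs.toIsWeaklyRegular
  have hm₁ : X x₁ * X y ∈ srIdeal K Δ := (X_mul_X_mem_srIdeal_iff (hne hx₁ h1y)).mpr h1y
  have hm₂ : X x₂ * X y ∈ srIdeal K Δ := (X_mul_X_mem_srIdeal_iff (hne hx₂ h2y)).mpr h2y
  rw [hI'] at hm₁ hm₂
  have hmem := mem_colon_mul_of_mul_eq_mul hrs' (u := X x₁) (v := X x₂) hm₁ hm₂ (by ring)
  rw [← hI'] at hmem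
  refine prod_X_notMem_ker_constantCoeff_mul_srIdeal (K := K)
    (fun G hG => Δ.mem_faces_of_ssubset_pair hx₁ hy hG) ?_
  rw [Finset.prod_pair (hne hx₁ h1y)]
  exact Ideal.mul_mono_left (srIdeal_sup_span_X_colon_X_le_ker_constantCoeff h12 hx₂) hmem

/-- **Lemma 1.7.** Let `Δ` be a locally complete intersection complex and
`x₁, x₂, y` distinct vertices with `X₁Y, X₂Y ∈ I_Δ`.  Then for every vertex
`z ∉ {x₁, x₂, y}` at least one of `X₁Z`, `X₂Z`, `YZ` lies in `I_Δ`. -/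
theorem mem_srIdeal_of_locallyCI (K : Type) [Field K] {n : ℕ}
    (Δ : SimComplex n) (hfull : Δ.OnFullVertexSet) (hlci : LocallyCI K Δ)
    (x₁ x₂ y : Fin n) (h12 : x₁ ≠ x₂) (h1y : x₁ ≠ y) (h2y : x₂ ≠ y)
    (hm1 : (X x₁ * X y : MvPolynomial (Fin n) K) ∈ srIdeal K Δ)
    (hm2 : (X x₂ * X y : MvPolynomial (Fin n) K) ∈ srIdeal K Δ)
    (z : Fin n) (hz1 : z ≠ x₁) (hz2 : z ≠ x₂) (hzy : z ≠ y) :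
    (X x₁ * X z : MvPolynomial (Fin n) K) ∈ srIdeal K Δ ∨
    (X x₂ * X z : MvPolynomial (Fin n) K) ∈ srIdeal K Δ ∨
    (X y * X z : MvPolynomial (Fin n) K) ∈ srIdeal K Δ := by
  simp only [X_mul_X_mem_srIdeal_iff, h1y, h2y, hz1.symm, hz2.symm, hzy.symm, ne_eq,
    not_false_eq_true] at hm1 hm2 ⊢
  by_contra! hfaces
  obtain ⟨h1z, h2z, hyz⟩ := hfaces
  exact not_isCIComplex_of_pair_notMem_of_pair_notMem K h12
    (Δ.singleton_mem_link (hfull z) hz1.symm h1z) (Δ.singleton_mem_link (hfull z) hz2.symm h2z)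
    (Δ.singleton_mem_link (hfull z) hzy.symm hyz) (Δ.notMem_link_of_notMem (hfull z) hm1)
    (Δ.notMem_link_of_notMem (hfull z) hm2) (hlci z (hfull z))
end

section
/- Let V = V_1 ∪ V_2 with V_1 ∩ V_2 = ∅, and let Δ_i be a simplicial complex on V_i for i=1,2. If Δ_1 and Δ_2 are both locally complete intersection complexes, then their disjoint union Δ_1 ∪ Δ_2 (a simplicial complex on V) is a locally complete intersection complex. Moreover, writing K[Δ_1]=K[X_1,…,X_m]/I_{Δ_1} and K[Δ_2]=K[Y_1,…,Y_n]/I_{Δ_2}, one has K[Δ_1 ∪ Δ_2] ≅ K[X_1,…,X_m,Y_1,…,Y_n]/(I_{Δ_1}, I_{Δ_2}, {X_iY_j : 1 ≤ i ≤ m, 1 ≤ j ≤ n}). -/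
open MvPolynomial

set_option synthInstance.maxHeartbeats 1000000
set_option maxHeartbeats 1000000

namespace SimComplex

variable {n : ℕ}

@[ext]
lemma ext {Δ Γ : SimComplex n} (h : Δ.faces = Γ.faces) : Δ = Γ := by
  cases Δ; cases Γ; cases h; rfl

lemma union_comm (Δ₁ Δ₂ : SimComplex n) : Δ₁.union Δ₂ = Δ₂.union Δ₁ :=
  ext (Set.union_comm _ _)

lemma coe_subset_vertices {Δ : SimComplex n} {F : Finset (Fin n)} (hF : F ∈ Δ.faces) :
    (F : Set (Fin n)) ⊆ Δ.vertices := fun _ hv =>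
  Δ.down_closed hF (Finset.singleton_subset_iff.mpr hv)

lemma eq_empty_of_subset_vertices_of_mem {Δ₁ Δ₂ : SimComplex n}
    (hdisj : Disjoint Δ₁.vertices Δ₂.vertices) {F : Finset (Fin n)}
    (h₁ : (F : Set (Fin n)) ⊆ Δ₁.vertices) (h₂ : F ∈ Δ₂.faces) : F = ∅ :=
  Finset.coe_eq_empty.mp (Set.subset_empty_iff.mp
    ((Set.subset_inter h₁ (coe_subset_vertices h₂)).trans (Set.disjoint_iff.mp hdisj)))

lemma link_union_left {Δ₁ Δ₂ : SimComplex n} {F : Finset (Fin n)} (hF : F ∈ Δ₁.faces)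
    (hF₂ : F ∉ Δ₂.faces) (hu : F ∈ (Δ₁.union Δ₂).faces) :
    (Δ₁.union Δ₂).link F hu = Δ₁.link F hF := by
  ext G
  simp only [link, union, Set.mem_ofPred_eq, Set.mem_union, and_congr_right_iff]
  exact fun _ => or_iff_left fun hG => hF₂ (Δ₂.down_closed hG Finset.subset_union_right)

lemma link_union_right {Δ₁ Δ₂ : SimComplex n} {F : Finset (Fin n)} (hF : F ∈ Δ₂.faces)
    (hF₁ : F ∉ Δ₁.faces) (hu : F ∈ (Δ₁.union Δ₂).faces) :
    (Δ₁.union Δ₂).link F hu = Δ₂.link F hF := by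
  simpa only [union_comm Δ₁ Δ₂] using link_union_left hF hF₁ (union_comm Δ₁ Δ₂ ▸ hu)

end SimComplex

open SimComplex

lemma LocallyCI.union {K : Type*} [Field K] {n : ℕ} {Δ₁ Δ₂ : SimComplex n}
    (hdisj : Disjoint Δ₁.vertices Δ₂.vertices) (h₁ : LocallyCI K Δ₁) (h₂ : LocallyCI K Δ₂) :
    LocallyCI K (Δ₁.union Δ₂) := by
  intro v hu
  rcases id hu with hv | hv
  · rw [link_union_left hv (Set.disjoint_left.mp hdisj hv) hu]
    exact h₁ v hv
  · rw [link_union_right hv (Set.disjoint_right.mp hdisj hv) hu]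
    exact h₂ v hv

lemma MvPolynomial.X_mul_X_dvd_prod_X {R σ : Type*} [CommSemiring R] [DecidableEq σ]
    {i j : σ} {F : Finset σ} (hij : i ≠ j) (hi : i ∈ F) (hj : j ∈ F) :
    (X i * X j : MvPolynomial σ R) ∣ ∏ k ∈ F, X k := by
  rw [← Finset.prod_pair hij]
  exact Finset.prod_dvd_prod_of_subset _ _ _ (Finset.insert_subset hi
    (Finset.singleton_subset_iff.mpr hj))

section StanleyReisner

variable (K : Type*) [Field K] {n : ℕ} {Δ₁ Δ₂ : SimComplex n}

lemma relSRIdeal_le_srIdeal_union (hdisj : Disjoint Δ₁.vertices Δ₂.vertices) :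
    relSRIdeal K Δ₁ ≤ srIdeal K (Δ₁.union Δ₂) := by
  rw [relSRIdeal, Ideal.span_le]
  rintro _ ⟨F, hFV, hF₁, rfl⟩
  refine Ideal.subset_span ⟨F, fun hF => hF.elim hF₁ fun hF₂ => ?_, rfl⟩
  exact hF₁ (eq_empty_of_subset_vertices_of_mem hdisj hFV hF₂ ▸ Δ₁.empty_mem)

lemma span_X_mul_X_le_srIdeal_union (hdisj : Disjoint Δ₁.vertices Δ₂.vertices) :
    Ideal.span {m | ∃ i ∈ Δ₁.vertices, ∃ j ∈ Δ₂.vertices, m = X i * X j} ≤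
      srIdeal K (Δ₁.union Δ₂) := by
  rw [Ideal.span_le]
  rintro _ ⟨i, hi, j, hj, rfl⟩
  have hij : ({i, j} : Finset (Fin n)) ∉ (Δ₁.union Δ₂).faces := by
    rintro (h | h)
    · exact Set.disjoint_left.mp hdisj (coe_subset_vertices h (by simp)) hj
    · exact Set.disjoint_left.mp hdisj hi (coe_subset_vertices h (by simp))
  refine Ideal.subset_span ⟨{i, j}, hij, ?_⟩
  rw [Finset.prod_pair (ne_of_mem_of_not_mem hi (Set.disjoint_right.mp hdisj hj))]

/-- A nonface of the union lies in one vertex set, or else contains an edge between them. -/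
lemma srIdeal_union_le (hcover : Δ₁.vertices ∪ Δ₂.vertices = Set.univ) :
    srIdeal K (Δ₁.union Δ₂) ≤ relSRIdeal K Δ₁ ⊔ relSRIdeal K Δ₂ ⊔
      Ideal.span {m | ∃ i ∈ Δ₁.vertices, ∃ j ∈ Δ₂.vertices, m = X i * X j} := by
  rw [srIdeal, Ideal.span_le]
  rintro _ ⟨F, hF, rfl⟩
  obtain ⟨hF₁, hF₂⟩ := not_or.mp hF
  by_cases hFV₁ : (F : Set (Fin n)) ⊆ Δ₁.vertices
  · exact Ideal.mem_sup_left (Ideal.mem_sup_left (Ideal.subset_span ⟨F, hFV₁, hF₁, rfl⟩))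
  by_cases hFV₂ : (F : Set (Fin n)) ⊆ Δ₂.vertices
  · exact Ideal.mem_sup_left (Ideal.mem_sup_right (Ideal.subset_span ⟨F, hFV₂, hF₂, rfl⟩))
  obtain ⟨j, hjF, hj₁⟩ := Set.not_subset.mp hFV₁
  obtain ⟨i, hiF, hi₂⟩ := Set.not_subset.mp hFV₂
  have hV : ∀ v, v ∈ Δ₁.vertices ∨ v ∈ Δ₂.vertices := Set.eq_univ_iff_forall.mp hcover
  have hi₁ : i ∈ Δ₁.vertices := (hV i).resolve_right hi₂
  have hj₂ : j ∈ Δ₂.vertices := (hV j).resolve_left hj₁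
  exact Ideal.mem_sup_right (Ideal.mem_of_dvd _
    (X_mul_X_dvd_prod_X (ne_of_mem_of_not_mem hi₁ hj₁) hiF hjF)
    (Ideal.subset_span ⟨i, hi₁, j, hj₂, rfl⟩))

lemma srIdeal_union_eq (hdisj : Disjoint Δ₁.vertices Δ₂.vertices)
    (hcover : Δ₁.vertices ∪ Δ₂.vertices = Set.univ) :
    srIdeal K (Δ₁.union Δ₂) = relSRIdeal K Δ₁ ⊔ relSRIdeal K Δ₂ ⊔
      Ideal.span {m | ∃ i ∈ Δ₁.vertices, ∃ j ∈ Δ₂.vertices, m = X i * X j} := by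
  refine le_antisymm (srIdeal_union_le K hcover) (sup_le (sup_le ?_ ?_) ?_)
  · exact relSRIdeal_le_srIdeal_union K hdisj
  · rw [union_comm]
    exact relSRIdeal_le_srIdeal_union K hdisj.symm
  · exact span_X_mul_X_le_srIdeal_union K hdisj

end StanleyReisner

/-- **Lemma 1.16.** If `Δ₁`, `Δ₂` are locally complete intersection complexes
on disjoint vertex sets `V₁`, `V₂` with `V = V₁ ∪ V₂`, then their disjoint
union is a locally complete intersection complex; moreover
`K[Δ₁ ∪ Δ₂] ≅ K[X,Y]/(I_{Δ₁}, I_{Δ₂}, {XᵢYⱼ})`. -/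
theorem locallyCI_union_of_disjoint (K : Type) [Field K] {N : ℕ}
    (Δ₁ Δ₂ : SimComplex N)
    (hdisj : Disjoint Δ₁.vertices Δ₂.vertices)
    (hcover : Δ₁.vertices ∪ Δ₂.vertices = Set.univ)
    (h1 : LocallyCI K Δ₁) (h2 : LocallyCI K Δ₂) :
    LocallyCI K (Δ₁.union Δ₂) ∧
      Nonempty ((MvPolynomial (Fin N) K ⧸ srIdeal K (Δ₁.union Δ₂)) ≃ₐ[K]
        (MvPolynomial (Fin N) K ⧸
          (relSRIdeal K Δ₁ ⊔ relSRIdeal K Δ₂ ⊔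
            Ideal.span {m | ∃ i ∈ Δ₁.vertices, ∃ j ∈ Δ₂.vertices,
              m = X i * X j}))) := by
  exact ⟨h1.union hdisj h2, ⟨Ideal.quotientEquivAlgOfEq K (srIdeal_union_eq K hdisj hcover)⟩⟩
end
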